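/- arXiv:1504.02918 — 2 statements merged into one kernel-verified Lean document; each statement's English description precedes it below -/
import Mathlib

section
/- Let T > 0, ν > 0, c > 0 and let α be a real number with 2 ≤ α ≤ 4. Let y : [0,T] → ℝ be differentiable with y(t) ≥ 0 for all t ∈ [0,T], and let A : [0,T] → ℝ satisfy A(t) ≥ 0 for all t ∈ [0,T]. Suppose y'(t) + ν·A(t)² ≤ c · y(t)^{3/4} · A(t)^{3/2} for all t ∈ [0,T], and that ∫₀^{T} y(s)^{α/2} ds < (16ν³/(27c⁴)) · (1 − cos(1/(y(0)+1))). Then for every t ∈ [0,T], y(t) ≤ 1/arccos((1 + cos(1/(y(0)+1)))/2) − 1; in particular y is bounded on [0,T]. -/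
/-!
Young's inequality turns the differential inequality into `y' ≤ K y³` with
`K = 27c⁴/(256ν³)`. Along such a `y`, the quantity `cos (1/(y+1))` grows at rate
`sin (1/(y+1)) y'/(y+1)² ≤ K (y/(y+1))³ ≤ K y^{α/2}`, so it never exceeds
`cos (1/(y(0)+1)) + K ∫₀ᵀ y^{α/2}`. The smallness condition keeps this below
`(1 + cos (1/(y(0)+1)))/2 < 1`, and inverting `cos` on `[0, π]` bounds `y`.
-/

open Real Set intervalIntegral

lemma four_mul_pow_three_mul_le (X Y : ℝ) : 4 * X ^ 3 * Y ≤ 3 * X ^ 4 + Y ^ 4 := by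
  -- `3X⁴ + Y⁴ - 4X³Y = (X - Y)² (2X² + (X + Y)²)`
  nlinarith [mul_nonneg (sq_nonneg (X - Y)) (add_nonneg (mul_nonneg zero_le_two (sq_nonneg X))
    (sq_nonneg (X + Y)))]

lemma young_rpow_three_quarters_three_halves {ν : ℝ} (hν : 0 < ν) (c : ℝ) {a b : ℝ}
    (ha : 0 ≤ a) (hb : 0 ≤ b) :
    c * a ^ ((3 : ℝ) / 4) * b ^ ((3 : ℝ) / 2) ≤ ν * b ^ 2 + 27 * c ^ 4 / (256 * ν ^ 3) * a ^ 3 := by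
  set u := a ^ ((1 : ℝ) / 4)
  set v := b ^ ((1 : ℝ) / 2)
  have hu3 : a ^ ((3 : ℝ) / 4) = u ^ 3 := by rw [← rpow_mul_natCast ha]; norm_num
  have hu12 : a ^ 3 = u ^ 12 := by rw [← rpow_mul_natCast ha]; norm_num
  have hv3 : b ^ ((3 : ℝ) / 2) = v ^ 3 := by rw [← rpow_mul_natCast hb]; norm_num
  have hv4 : b ^ 2 = v ^ 4 := by rw [← rpow_mul_natCast hb]; norm_num
  rw [hu3, hu12, hv3, hv4, div_mul_eq_mul_div, ← sub_le_iff_le_add', le_div_iff₀ (by positivity)]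
  nlinarith [four_mul_pow_three_mul_le (4 / 3 * ν * v) (c * u ^ 3), pow_pos hν 3]

lemma pow_three_div_add_one_pow_three_le_rpow {a β : ℝ} (ha : 0 ≤ a) (hβ0 : 0 ≤ β)
    (hβ3 : β ≤ 3) : a ^ 3 / (a + 1) ^ 3 ≤ a ^ β := by
  rcases le_or_gt a 1 with ha1 | ha1
  · calc a ^ 3 / (a + 1) ^ 3 ≤ a ^ 3 := div_le_self (by positivity) (one_le_pow₀ (by linarith))
      _ = a ^ (3 : ℝ) := (rpow_natCast a 3).symm
      _ ≤ a ^ β := rpow_le_rpow_of_exponent_ge' ha ha1 hβ0 hβ3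
  · calc a ^ 3 / (a + 1) ^ 3 ≤ 1 :=
          div_le_one_of_le₀ (pow_le_pow_left₀ ha (by linarith) 3) (by positivity)
      _ ≤ a ^ β := one_le_rpow ha1.le hβ0

lemma inv_add_one_le_pi {x : ℝ} (hx : 0 ≤ x) : (x + 1)⁻¹ ≤ π :=
  (inv_le_one_of_one_le₀ (by linarith)).trans (by linarith [pi_gt_three])

lemma sin_inv_add_one_mul_div_sq_le {x d K β : ℝ} (hx : 0 ≤ x) (hK : 0 ≤ K) (hβ0 : 0 ≤ β)
    (hβ3 : β ≤ 3) (hd : d ≤ K * x ^ 3) : sin (x + 1)⁻¹ * d / (x + 1) ^ 2 ≤ K * x ^ β := by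
  have hx1 : 0 < x + 1 := by linarith
  have hRHS : 0 ≤ K * x ^ β := mul_nonneg hK (rpow_nonneg hx β)
  rcases le_or_gt d 0 with hd0 | hd0
  · have hsin : 0 ≤ sin (x + 1)⁻¹ :=
      sin_nonneg_of_nonneg_of_le_pi (by positivity) (inv_add_one_le_pi hx)
    exact (div_nonpos_of_nonpos_of_nonneg (mul_nonpos_of_nonneg_of_nonpos hsin hd0)
      (by positivity)).trans hRHS
  · calc sin (x + 1)⁻¹ * d / (x + 1) ^ 2 ≤ (x + 1)⁻¹ * (K * x ^ 3) / (x + 1) ^ 2 := by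
          gcongr
          exact sin_le (by positivity)
      _ = K * (x ^ 3 / (x + 1) ^ 3) := by field_simp
      _ ≤ K * x ^ β := by gcongr; exact pow_three_div_add_one_pow_three_le_rpow hx hβ0 hβ3

lemma cos_inv_add_one_sub_le_integral {y y' : ℝ → ℝ} {K β a b : ℝ} (hab : a ≤ b) (hK : 0 ≤ K)
    (hβ0 : 0 ≤ β) (hβ3 : β ≤ 3) (hy : ∀ t ∈ Icc a b, HasDerivAt y (y' t) t)
    (hynn : ∀ t ∈ Icc a b, 0 ≤ y t) (hy' : ∀ t ∈ Icc a b, y' t ≤ K * y t ^ 3) :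
    cos (y b + 1)⁻¹ - cos (y a + 1)⁻¹ ≤ K * ∫ s in a..b, y s ^ β := by
  have hpos : ∀ t ∈ Icc a b, y t + 1 ≠ 0 := fun t ht => by linarith [hynn t ht]
  have hycont : ContinuousOn y (Icc a b) := fun t ht => (hy t ht).continuousAt.continuousWithinAt
  have hderiv : ∀ t ∈ Icc a b, HasDerivAt (fun s => cos (y s + 1)⁻¹)
      (sin (y t + 1)⁻¹ * y' t / (y t + 1) ^ 2) t := fun t ht =>
    (((hy t ht).add_const 1).inv (hpos t ht)).cos.congr_deriv (by simp only [Pi.inv_apply]; ring)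
  rw [← integral_const_mul]
  refine sub_le_integral_of_hasDeriv_right_of_le hab
    (continuous_cos.comp_continuousOn ((hycont.add continuousOn_const).inv₀ hpos))
    (fun t ht => (hderiv t (Ioo_subset_Icc_self ht)).hasDerivWithinAt)
    ((continuousOn_const.mul (hycont.rpow_const fun _ _ => Or.inr hβ0)).integrableOn_Icc)
    (fun t ht => ?_)
  have ht' := Ioo_subset_Icc_self ht
  exact sin_inv_add_one_mul_div_sq_le (hynn t ht') hK hβ0 hβ3 (hy' t ht')

lemma le_inv_arccos_sub_one {x v : ℝ} (hx : 0 ≤ x) (hv : v < 1) (hcos : cos (x + 1)⁻¹ ≤ v) :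
    x ≤ (arccos v)⁻¹ - 1 := by
  have hx1 : 0 < x + 1 := by linarith
  have harccos : arccos v ≤ (x + 1)⁻¹ := by
    simpa [arccos_cos (inv_nonneg.2 hx1.le) (inv_add_one_le_pi hx)] using arccos_le_arccos hcos
  rwa [le_sub_iff_add_le, le_inv_comm₀ hx1 (arccos_pos.2 hv)]

lemma integral_rpow_le_integral_rpow_of_le {y : ℝ → ℝ} {β a t b : ℝ} (hat : a ≤ t) (htb : t ≤ b)
    (hβ : 0 ≤ β) (hycont : ContinuousOn y (Icc a b)) (hynn : ∀ s ∈ Icc a b, 0 ≤ y s) :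
    (∫ s in a..t, y s ^ β) ≤ ∫ s in a..b, y s ^ β :=
  integral_mono_interval le_rfl hat htb
    (MeasureTheory.ae_restrict_of_forall_mem measurableSet_Ioc fun s hs =>
      rpow_nonneg (hynn s (Ioc_subset_Icc_self hs)) _)
    ((hycont.rpow_const fun _ _ => Or.inr hβ).intervalIntegrable_of_Icc (hat.trans htb))

theorem bounded_zero_force_general (T ν c α : ℝ) (hν : 0 < ν) (hc : 0 < c)
    (hα1 : 2 ≤ α) (hα2 : α ≤ 4) (y y' A : ℝ → ℝ)
    (hy : ∀ t ∈ Set.Icc 0 T, HasDerivAt y (y' t) t)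
    (hynn : ∀ t ∈ Set.Icc 0 T, 0 ≤ y t)
    (hA : ∀ t ∈ Set.Icc 0 T, 0 ≤ A t)
    (hineq : ∀ t ∈ Set.Icc 0 T,
      y' t + ν * A t ^ 2 ≤ c * y t ^ ((3:ℝ)/4) * A t ^ ((3:ℝ)/2))
    (hsmall : (∫ s in (0:ℝ)..T, y s ^ (α / 2)) <
      16 * ν ^ 3 / (27 * c ^ 4) * (1 - Real.cos (1 / (y 0 + 1)))) :
    ∀ t ∈ Set.Icc 0 T,
      y t ≤ 1 / Real.arccos ((1 + Real.cos (1 / (y 0 + 1))) / 2) - 1 := by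
  intro t ht
  set K := 27 * c ^ 4 / (256 * ν ^ 3)
  have hK : 0 < K := by positivity
  have hsub : Icc 0 t ⊆ Icc 0 T := Icc_subset_Icc_right ht.2
  have hy' : ∀ s ∈ Icc 0 T, y' s ≤ K * y s ^ 3 := fun s hs => by
    nlinarith [hineq s hs, young_rpow_three_quarters_three_halves hν c (hynn s hs) (hA s hs),
      sq_nonneg (A s)]
  have hgrowth := cos_inv_add_one_sub_le_integral (β := α / 2) ht.1 hK.le (by linarith)
    (by linarith) (fun s hs => hy s (hsub hs)) (fun s hs => hynn s (hsub hs))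
    (fun s hs => hy' s (hsub hs))
  have hmono := integral_rpow_le_integral_rpow_of_le (β := α / 2) ht.1 ht.2 (by linarith)
    (fun s hs => (hy s hs).continuousAt.continuousWithinAt) hynn
  have hcos0 : cos (y 0 + 1)⁻¹ < 1 := by
    have hy0 : 0 ≤ y 0 := hynn 0 ⟨le_rfl, ht.1.trans ht.2⟩
    simpa using cos_lt_cos_of_nonneg_of_le_pi le_rfl (inv_add_one_le_pi hy0)
      (inv_pos.2 (by linarith))
  simp only [one_div] at hsmall ⊢
  have hKsmall : K * (∫ s in (0:ℝ)..T, y s ^ (α / 2)) < (1 - cos (y 0 + 1)⁻¹) / 16 :=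
    calc K * (∫ s in (0:ℝ)..T, y s ^ (α / 2))
        < K * (16 * ν ^ 3 / (27 * c ^ 4) * (1 - cos (y 0 + 1)⁻¹)) := by gcongr
      _ = (1 - cos (y 0 + 1)⁻¹) / 16 := by simp only [K]; field_simp; ring
  apply le_inv_arccos_sub_one (hynn t ht) (by linarith)
  linarith [mul_le_mul_of_nonneg_left hmono hK.le]

/-- ODE form of the paper's Theorem 2: the differential inequality
`y' + νA² ≤ c y^{3/4} A^{3/2}` together with the smallness condition
`∫₀ᵀ y^{α/2} < (16ν³/(27c⁴))(1 - cos(1/(y(0)+1)))` yields a uniform bound on `y`. -/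
theorem bounded_zero_force (T ν c α : ℝ) (hT : 0 < T) (hν : 0 < ν) (hc : 0 < c)
    (hα1 : 2 ≤ α) (hα2 : α ≤ 4) (y y' A : ℝ → ℝ)
    (hy : ∀ t ∈ Set.Icc 0 T, HasDerivAt y (y' t) t)
    (hynn : ∀ t ∈ Set.Icc 0 T, 0 ≤ y t)
    (hA : ∀ t ∈ Set.Icc 0 T, 0 ≤ A t)
    (hineq : ∀ t ∈ Set.Icc 0 T,
      y' t + ν * A t ^ 2 ≤ c * y t ^ ((3:ℝ)/4) * A t ^ ((3:ℝ)/2))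
    (hsmall : (∫ s in (0:ℝ)..T, y s ^ (α / 2)) <
      16 * ν ^ 3 / (27 * c ^ 4) * (1 - Real.cos (1 / (y 0 + 1)))) :
    ∀ t ∈ Set.Icc 0 T,
      y t ≤ 1 / Real.arccos ((1 + Real.cos (1 / (y 0 + 1))) / 2) - 1 :=
  bounded_zero_force_general T ν c α hν hc hα1 hα2 y y' A hy hynn hA hineq hsmall
end

section
/- Let T > 0, ν > 0, c > 0 and let α be a real number with 2 ≤ α ≤ 4. Let y : [0,T] → ℝ be differentiable with y(t) ≥ 0 for all t ∈ [0,T], let A : [0,T] → ℝ satisfy A(t) ≥ 0 for all t ∈ [0,T], and let g : [0,T] → ℝ be Lebesgue integrable with g(t) ≥ 0 for all t ∈ [0,T]. Suppose y'(t) + ν·A(t)² ≤ g(t) + c · y(t)^{3/4} · A(t)^{3/2} for all t ∈ [0,T], and set K = cos(1/(y(0)+1)) + ∫₀^{T} g(s) ds + (27c⁴/(32ν³)) · ∫₀^{T} y(s)^{α/2} ds. If K < 1, then for every t ∈ [0,T], y(t) ≤ 1/arccos(K) − 1; in particular y is bounded on [0,T]. -/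
/-!
Young's inequality absorbs the nonlinear term into `ν A²` at the price of `C y³`, with
`C = 27 c⁴ / (32 ν³)`, so `y' ≤ g + C y³`. The Lyapunov function `cos (1 / (y + 1))` has derivative
`sin (1 / (y + 1)) y' / (y + 1)² ≤ y' / (y + 1)³`, and `y³ / (y + 1)³ ≤ y ^ (α / 2)`; hence it grows
by at most `∫ g + C ∫ y ^ (α / 2)`, so it stays below `K < 1`, and inverting the cosine bounds `y`.
-/

open intervalIntegral MeasureTheory Real Set

/-- Young's inequality with exponents `4` and `4/3`. -/
theorem mul_pow_three_le {ν : ℝ} (hν : 0 < ν) (x z : ℝ) :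
    x * z ^ 3 ≤ ν / 2 * z ^ 4 + 27 * x ^ 4 / (32 * ν ^ 3) := by
  have hsos : ν / 2 * z ^ 4 + 27 * x ^ 4 / (32 * ν ^ 3) - x * z ^ 3 =
      (3 * x - 2 * (ν * z)) ^ 2 * ((x + 2 * (ν * z)) ^ 2 + 2 * x ^ 2) / (32 * ν ^ 3) := by
    field_simp
    ring
  have : 0 ≤ (3 * x - 2 * (ν * z)) ^ 2 * ((x + 2 * (ν * z)) ^ 2 + 2 * x ^ 2) / (32 * ν ^ 3) := by
    positivity
  linarith

theorem le_add_mul_pow_three_of_add_le {ν c y y' A g : ℝ} (hν : 0 < ν) (hy : 0 ≤ y) (hA : 0 ≤ A)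
    (h : y' + ν * A ^ 2 ≤ g + c * y ^ ((3 : ℝ) / 4) * A ^ ((3 : ℝ) / 2)) :
    y' ≤ g + 27 * c ^ 4 / (32 * ν ^ 3) * y ^ 3 := by
  have young := mul_pow_three_le hν (c * y ^ ((3 : ℝ) / 4)) (A ^ ((1 : ℝ) / 2))
  have hy3 : (y ^ ((3 : ℝ) / 4)) ^ 4 = y ^ 3 := by rw [← rpow_mul_natCast hy]; norm_num
  have hA3 : (A ^ ((1 : ℝ) / 2)) ^ 3 = A ^ ((3 : ℝ) / 2) := by rw [← rpow_mul_natCast hA]; norm_num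
  have hA4 : (A ^ ((1 : ℝ) / 2)) ^ 4 = A ^ 2 := by rw [← rpow_mul_natCast hA]; norm_num
  rw [mul_pow, hy3, hA3, hA4] at young
  have hC : 27 * (c ^ 4 * y ^ 3) / (32 * ν ^ 3) = 27 * c ^ 4 / (32 * ν ^ 3) * y ^ 3 := by ring
  nlinarith [sq_nonneg A]

theorem div_add_one_pow_three_le_rpow {x p : ℝ} (hx : 0 ≤ x) (hp : p ∈ Icc 0 3) :
    (x / (x + 1)) ^ 3 ≤ x ^ p := by
  have hratio : x / (x + 1) ≤ min x 1 := by
    refine le_min ?_ ?_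
    · exact div_le_self hx (by linarith)
    · exact (div_le_one (by linarith)).2 (by linarith)
  rcases le_total x 1 with hx1 | hx1
  · calc (x / (x + 1)) ^ 3 ≤ x ^ 3 := by gcongr; exact hratio.trans (min_le_left _ _)
      _ = x ^ (3 : ℝ) := (rpow_natCast x 3).symm
      _ ≤ x ^ p := by
        rcases hx.eq_or_lt with rfl | hx0
        · rw [zero_rpow (by norm_num)]; exact rpow_nonneg le_rfl p
        · exact rpow_le_rpow_of_exponent_ge hx0 hx1 hp.2
  · calc (x / (x + 1)) ^ 3 ≤ 1 := pow_le_one₀ (by positivity) (hratio.trans (min_le_right _ _))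
      _ ≤ x ^ p := one_le_rpow hx1 hp.1

theorem hasDerivAt_cos_inv_add_one {f : ℝ → ℝ} {f' x : ℝ} (hf : HasDerivAt f f' x)
    (hx : f x + 1 ≠ 0) :
    HasDerivAt (fun t ↦ cos (f t + 1)⁻¹) (sin (f x + 1)⁻¹ * (f x + 1)⁻¹ ^ 2 * f') x := by
  convert ((hf.add_const 1).fun_inv hx).cos using 1
  rw [inv_pow, div_eq_mul_inv]
  ring

theorem sin_inv_add_one_mul_le {u v g C p : ℝ} (hu : 0 ≤ u) (hg : 0 ≤ g) (hC : 0 ≤ C)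
    (hp : p ∈ Icc 0 3) (hv : v ≤ g + C * u ^ 3) :
    sin (u + 1)⁻¹ * (u + 1)⁻¹ ^ 2 * v ≤ g + C * u ^ p := by
  set s := (u + 1)⁻¹
  have hs0 : 0 ≤ s := by positivity
  have hs1 : s ≤ 1 := inv_le_one_of_one_le₀ (by linarith)
  have hsin0 : 0 ≤ sin s := sin_nonneg_of_nonneg_of_le_pi hs0 (hs1.trans (by linarith [pi_gt_three]))
  have hrhs : 0 ≤ g + C * u ^ p := by positivity
  rcases le_or_gt v 0 with hv0 | hv0
  · exact (mul_nonpos_of_nonneg_of_nonpos (by positivity) hv0).trans hrhs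
  have hus : (u * s) ^ 3 ≤ u ^ p := by
    simpa only [s, div_eq_mul_inv] using div_add_one_pow_three_le_rpow hu hp
  have hs3 : s ^ 3 ≤ 1 := pow_le_one₀ hs0 hs1
  calc sin s * s ^ 2 * v ≤ s * s ^ 2 * v := by gcongr; exact sin_le hs0
    _ ≤ s ^ 3 * (g + C * u ^ 3) := by rw [← pow_succ']; gcongr
    _ = s ^ 3 * g + C * (u * s) ^ 3 := by ring
    _ ≤ g + C * u ^ p := by gcongr; exact mul_le_of_le_one_left hg hs3

theorem le_add_integral_of_hasDerivAt_of_le {f f' G : ℝ → ℝ} {a b t : ℝ}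
    (hf : ∀ s ∈ Icc a b, HasDerivAt f (f' s) s) (hf' : ∀ s ∈ Icc a b, f' s ≤ G s)
    (hG : IntegrableOn G (Icc a b)) (hG0 : ∀ s ∈ Icc a b, 0 ≤ G s) (ht : t ∈ Icc a b) :
    f t ≤ f a + ∫ s in a..b, G s := by
  have hsub : Icc a t ⊆ Icc a b := Icc_subset_Icc le_rfl ht.2
  have hle : f t - f a ≤ ∫ s in a..t, G s :=
    sub_le_integral_of_hasDeriv_right_of_le ht.1
      (fun s hs ↦ (hf s (hsub hs)).continuousAt.continuousWithinAt)
      (fun s hs ↦ (hf s (hsub (Ioo_subset_Icc_self hs))).hasDerivWithinAt)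
      (hG.mono_set hsub) (fun s hs ↦ hf' s (hsub (Ioo_subset_Icc_self hs)))
  have hmono : ∫ s in a..t, G s ≤ ∫ s in a..b, G s := by
    refine integral_mono_interval le_rfl ht.1 ht.2 ?_
      ((intervalIntegrable_iff_integrableOn_Icc_of_le (ht.1.trans ht.2)).2 hG)
    filter_upwards [ae_restrict_mem measurableSet_Ioc] with s hs
    exact hG0 s (Ioc_subset_Icc_self hs)
  linarith

theorem le_one_div_arccos_sub_one {u K : ℝ} (hu : 0 ≤ u) (hK : cos (u + 1)⁻¹ ≤ K) (hK1 : K < 1) :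
    u ≤ 1 / arccos K - 1 := by
  have hs1 : (u + 1)⁻¹ ≤ 1 := inv_le_one_of_one_le₀ (by linarith)
  have harccos : arccos K ≤ (u + 1)⁻¹ := by
    calc arccos K ≤ arccos (cos (u + 1)⁻¹) := arccos_le_arccos hK
      _ = (u + 1)⁻¹ := arccos_cos (by positivity) (hs1.trans (by linarith [pi_gt_three]))
  have : u + 1 ≤ 1 / arccos K := by
    rw [le_one_div (by linarith) (arccos_pos.2 hK1), one_div]
    exact harccos
  linarith

theorem bounded_with_force_general (T ν c α : ℝ) (hν : 0 < ν)
    (hα1 : 2 ≤ α) (hα2 : α ≤ 4) (y y' A g : ℝ → ℝ)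
    (hy : ∀ t ∈ Set.Icc 0 T, HasDerivAt y (y' t) t)
    (hynn : ∀ t ∈ Set.Icc 0 T, 0 ≤ y t)
    (hA : ∀ t ∈ Set.Icc 0 T, 0 ≤ A t)
    (hgint : IntegrableOn g (Set.Icc 0 T))
    (hg : ∀ t ∈ Set.Icc 0 T, 0 ≤ g t)
    (hineq : ∀ t ∈ Set.Icc 0 T,
      y' t + ν * A t ^ 2 ≤ g t + c * y t ^ ((3:ℝ)/4) * A t ^ ((3:ℝ)/2))
    (K : ℝ)
    (hK : K = Real.cos (1 / (y 0 + 1)) + (∫ s in (0:ℝ)..T, g s) +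
      27 * c ^ 4 / (32 * ν ^ 3) * ∫ s in (0:ℝ)..T, y s ^ (α / 2))
    (hK1 : K < 1) :
    ∀ t ∈ Set.Icc 0 T, y t ≤ 1 / Real.arccos K - 1 := by
  intro t ht
  set C := 27 * c ^ 4 / (32 * ν ^ 3)
  have hα : α / 2 ∈ Icc 0 3 := ⟨by linarith, by linarith⟩
  have hT : 0 ≤ T := ht.1.trans ht.2
  have hyα : IntegrableOn (fun s ↦ y s ^ (α / 2)) (Icc 0 T) :=
    (ContinuousOn.rpow_const (fun s hs ↦ (hy s hs).continuousAt.continuousWithinAt)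
      (fun _ _ ↦ Or.inr hα.1)).integrableOn_Icc
  have hcos := le_add_integral_of_hasDerivAt_of_le (G := fun s ↦ g s + C * y s ^ (α / 2))
    (fun s hs ↦ hasDerivAt_cos_inv_add_one (hy s hs) (by linarith [hynn s hs]))
    (fun s hs ↦ sin_inv_add_one_mul_le (hynn s hs) (hg s hs) (by positivity) hα
      (le_add_mul_pow_three_of_add_le hν (hynn s hs) (hA s hs) (hineq s hs)))
    (hgint.add (hyα.const_mul C)) (fun s hs ↦ by have := hynn s hs; have := hg s hs; positivity) ht
  rw [intervalIntegral.integral_add ((intervalIntegrable_iff_integrableOn_Icc_of_le hT).2 hgint)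
    (((intervalIntegrable_iff_integrableOn_Icc_of_le hT).2 hyα).const_mul C),
    intervalIntegral.integral_const_mul] at hcos
  refine le_one_div_arccos_sub_one (hynn t ht) ?_ hK1
  rw [hK, one_div]
  linarith

/-- ODE form of the paper's Proposition 3: the forced differential inequality
`y' + νA² ≤ g + c y^{3/4} A^{3/2}` together with the smallness condition `K < 1`,
where `K = cos(1/(y(0)+1)) + ∫₀ᵀ g + (27c⁴/(32ν³)) ∫₀ᵀ y^{α/2}`, yields a uniform
bound on `y`. -/
theorem bounded_with_force (T ν c α : ℝ) (hT : 0 < T) (hν : 0 < ν) (hc : 0 < c)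
    (hα1 : 2 ≤ α) (hα2 : α ≤ 4) (y y' A g : ℝ → ℝ)
    (hy : ∀ t ∈ Set.Icc 0 T, HasDerivAt y (y' t) t)
    (hynn : ∀ t ∈ Set.Icc 0 T, 0 ≤ y t)
    (hA : ∀ t ∈ Set.Icc 0 T, 0 ≤ A t)
    (hgint : IntegrableOn g (Set.Icc 0 T))
    (hg : ∀ t ∈ Set.Icc 0 T, 0 ≤ g t)
    (hineq : ∀ t ∈ Set.Icc 0 T,
      y' t + ν * A t ^ 2 ≤ g t + c * y t ^ ((3:ℝ)/4) * A t ^ ((3:ℝ)/2))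
    (K : ℝ)
    (hK : K = Real.cos (1 / (y 0 + 1)) + (∫ s in (0:ℝ)..T, g s) +
      27 * c ^ 4 / (32 * ν ^ 3) * ∫ s in (0:ℝ)..T, y s ^ (α / 2))
    (hK1 : K < 1) :
    ∀ t ∈ Set.Icc 0 T, y t ≤ 1 / Real.arccos K - 1 :=
  bounded_with_force_general T ν c α hν hα1 hα2 y y' A g hy hynn hA hgint hg hineq K hK hK1
end
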